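/- For an infinite set X, the orthomodular poset Fact(X) is atomistic: every element of Fact(X) is the least upper bound of the set of atoms below it. -/

import Mathlib

/-- A factor pair is a pair of equivalence relations with `θ ∩ θ' = Δ` and `θ ∘ θ' = ∇`. -/
def IsFactorPair {X : Type*} (θ θ' : Setoid X) : Prop :=
  (∀ x y : X, θ x y ∧ θ' x y ↔ x = y) ∧
  ∀ x y : X, Relation.Comp (⇑θ) (⇑θ') x y

/-- `Fact X`, the set of factor pairs of `X`. -/
def FactPair (X : Type*) : Type _ :=
  {p : Setoid X × Setoid X // IsFactorPair p.1 p.2}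

/-- The order on `Fact X`: `(θ,θ') ≤ (φ,φ')` iff `φ ⊆ θ`, `θ' ⊆ φ'` and `φ∘θ' = θ'∘φ`. -/
def FactLE {X : Type*} (p q : FactPair X) : Prop :=
  q.1.1 ≤ p.1.1 ∧ p.1.2 ≤ q.1.2 ∧
    Relation.Comp (⇑q.1.1) (⇑p.1.2) = Relation.Comp (⇑p.1.2) (⇑q.1.1)

def FactLT {X : Type*} (p q : FactPair X) : Prop :=
  FactLE p q ∧ p ≠ q

/-- The orthocomplementation `(θ,θ')^⊥ = (θ',θ)` on `Fact X`. -/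
def FactPerp {X : Type*} (p : FactPair X) : FactPair X :=
  ⟨(p.1.2, p.1.1), by
    obtain ⟨h1, h2⟩ := p.2
    refine ⟨fun x y => ⟨fun h => (h1 x y).1 ⟨h.2, h.1⟩, ?_⟩, fun x y => ?_⟩
    · rintro rfl
      exact ⟨p.1.2.refl' x, p.1.1.refl' x⟩
    · obtain ⟨z, hz1, hz2⟩ := h2 y x
      exact ⟨z, p.1.2.symm' hz2, p.1.1.symm' hz1⟩⟩

/-- `0 = (∇,Δ)` in `Fact X`. -/
def FactZero (X : Type*) : FactPair X :=
  ⟨(⊤, ⊥), by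
    refine ⟨fun x y => ⟨fun h => ?_, ?_⟩, fun x y => ⟨y, ?_, ?_⟩⟩
    · simpa [Setoid.bot_def] using h.2
    · rintro rfl
      exact ⟨(⊤ : Setoid X).refl' x, (⊥ : Setoid X).refl' x⟩
    · simp [Setoid.top_def]
    · simp [Setoid.bot_def]⟩

/-- `1 = (Δ,∇)` in `Fact X`. -/
def FactOne (X : Type*) : FactPair X :=
  ⟨(⊥, ⊤), by
    refine ⟨fun x y => ⟨fun h => ?_, ?_⟩, fun x y => ⟨x, ?_, ?_⟩⟩
    · simpa [Setoid.bot_def] using h.1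
    · rintro rfl
      exact ⟨(⊥ : Setoid X).refl' x, (⊤ : Setoid X).refl' x⟩
    · simp [Setoid.bot_def]
    · simp [Setoid.top_def]⟩

/-- An atom of `Fact X`. -/
def IsFactAtom {X : Type*} (a : FactPair X) : Prop :=
  FactLT (FactZero X) a ∧ ∀ x : FactPair X, FactLT (FactZero X) x → ¬ FactLT x a

/-- An `n`-relation: every equivalence class has exactly `n` elements. -/
def IsNRel {X : Type*} (n : ℕ) (θ : Setoid X) : Prop :=
  ∀ x : X, Nat.card {y // θ x y} = n

/-- A `p`-atom: an atom `(φ,φ')` such that `φ'` is a `p`-relation. -/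
def IsPAtom {X : Type*} (p : ℕ) (a : FactPair X) : Prop :=
  IsFactAtom a ∧ IsNRel p a.1.2

/-- The image `σ(θ) = {(σ x, σ y) : (x,y) ∈ θ}` of an equivalence relation under a
permutation. -/
def permSetoid {X : Type*} (σ : Equiv.Perm X) (θ : Setoid X) : Setoid X :=
  ⟨fun a b => θ (σ.symm a) (σ.symm b),
    ⟨fun a => θ.refl' _, fun h => θ.symm' h, fun h1 h2 => θ.trans' h1 h2⟩⟩

/-- The action `Γ(σ)(θ,θ') = (σ(θ),σ(θ'))` of a permutation on factor pairs. -/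
def permFactPair {X : Type*} (σ : Equiv.Perm X) (t : FactPair X) : FactPair X :=
  ⟨(permSetoid σ t.1.1, permSetoid σ t.1.2), by
    obtain ⟨h1, h2⟩ := t.2
    refine ⟨fun x y => ⟨fun h => ?_, ?_⟩, fun x y => ?_⟩
    · exact σ.symm.injective ((h1 (σ.symm x) (σ.symm y)).1 ⟨h.1, h.2⟩)
    · rintro rfl
      exact ⟨t.1.1.refl' _, t.1.2.refl' _⟩
    · obtain ⟨w, hw1, hw2⟩ := h2 (σ.symm x) (σ.symm y)
      refine ⟨σ w, ?_, ?_⟩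
      · show t.1.1 (σ.symm x) (σ.symm (σ w))
        simpa using hw1
      · show t.1.2 (σ.symm (σ w)) (σ.symm y)
        simpa using hw2⟩

/-- An automorphism of `Fact X`: a bijection preserving `≤` in both directions and
commuting with `⊥`. -/
def IsFactAut {X : Type*} (α : FactPair X → FactPair X) : Prop :=
  Function.Bijective α ∧
  (∀ p q : FactPair X, FactLE p q ↔ FactLE (α p) (α q)) ∧
  ∀ p : FactPair X, α (FactPerp p) = FactPerp (α p)

/-- `Eq*(X)`: the equivalence relations on `X` that are `n`-relations for some `n ≥ 1`. -/
def EqStar (X : Type*) : Type _ :=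
  {θ : Setoid X // ∃ n : ℕ, 0 < n ∧ IsNRel n θ}

/-- A regular equivalence relation: any two classes are equinumerous. -/
def IsRegularRel {X : Type*} (θ : Setoid X) : Prop :=
  ∀ x y : X, Nonempty ({z // θ x z} ≃ {z // θ y z})

/-- The action of a permutation on `Eq*(X)`. -/
def permEqStar {X : Type*} (σ : Equiv.Perm X) (θ : EqStar X) : EqStar X :=
  ⟨permSetoid σ θ.1, by
    obtain ⟨n, hn, hrel⟩ := θ.2
    refine ⟨n, hn, fun x => ?_⟩
    have e : {y // (permSetoid σ θ.1) x y} ≃ {y // θ.1 (σ.symm x) y} :=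
      σ.symm.subtypeEquiv fun y => Iff.rfl
    rw [Nat.card_congr e]
    exact hrel (σ.symm x)⟩

/-!
A factor pair `(θ, θ')` is a decomposition `X ≃ X/θ × X/θ'`. Splitting the factor `X/θ` further
as `A × B` and moving `B` to the other side gives a factor pair below `(θ, θ')`. Given `x ≠ y`
with `θ' x y`, write `X/θ ≃ 𝔽_p × B` for a prime `p` (`p = 2` if `X/θ` is infinite) so that the
classes of `x` and `y` share their `B`-coordinate. The resulting `(ψ, ψ')` has `|X/ψ| = p` and is
an atom: below it, every `ψ'`-class (of size `p`) is partitioned into `χ'`-classes of size `|X/χ|`.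
Its second relation still relates `x` and `y`, and these atoms below `(θ, θ')` are enough to force
`φ ⊆ θ`, `θ' ⊆ φ'` and `φ ∘ θ' = θ' ∘ φ` as soon as they all lie below `(φ, φ')`.
-/

open Function

universe u

namespace Setoid

variable {α : Type*}

theorem relComp_comm_of_le {r s : Setoid α}
    (h : ∀ a b, Relation.Comp r s a b → Relation.Comp s r a b) :
    Relation.Comp r s = Relation.Comp s r := by
  funext a b
  refine propext ⟨h a b, fun ⟨c, hac, hcb⟩ => ?_⟩
  obtain ⟨d, hbd, hda⟩ := h b a ⟨c, r.symm' hcb, s.symm' hac⟩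
  exact ⟨d, r.symm' hda, s.symm' hbd⟩

theorem dvd_nat_card_of_forall_card_eq [Finite α] (r : Setoid α) {k : ℕ}
    (h : ∀ a, Nat.card {b // r a b} = k) : k ∣ Nat.card α := by
  classical
  have hfiber (q : Quotient r) : Nat.card {a // Quotient.mk r a = q} = k := by
    rw [← h q.out]
    refine Nat.card_congr (Equiv.subtypeEquivRight fun a => ?_)
    rw [← q.out_eq, Quotient.eq, q.out_eq]
    exact ⟨r.symm', r.symm'⟩
  have := Fintype.ofFinite (Quotient r)
  rw [← Nat.card_congr (Equiv.sigmaFiberEquiv (Quotient.mk r)), Nat.card_sigma]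
  simp [hfiber]

end Setoid

theorem exists_prime_nonempty_equiv_fin_prod (Q : Type u) [Nontrivial Q] :
    ∃ p, p.Prime ∧ ∃ B : Type u, Nonempty (Q ≃ Fin p × B) := by
  cases finite_or_infinite Q with
  | inl hfin =>
    set n := Nat.card Q
    have hp : n.minFac.Prime := Nat.minFac_prime (Finite.one_lt_card).ne'
    refine ⟨n.minFac, hp, ULift (Fin (n / n.minFac)), Finite.card_eq.mp ?_⟩
    simp [Nat.mul_div_cancel' (Nat.minFac_dvd n), n]
  | inr hinf =>
    refine ⟨2, Nat.prime_two, Q, Cardinal.eq.mp ?_⟩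
    simpa using (Cardinal.mul_eq_right (Cardinal.aleph0_le_mk Q)
      ((Cardinal.natCast_lt_aleph0 (n := 2)).le.trans (Cardinal.aleph0_le_mk Q)) two_ne_zero).symm

theorem exists_equiv_fin_prod_snd_eq {Q : Type u} {q₀ q₁ : Q} (h : q₀ ≠ q₁) :
    ∃ p, p.Prime ∧ ∃ (B : Type u) (e : Q ≃ Fin p × B), (e q₀).2 = (e q₁).2 := by
  have : Nontrivial Q := ⟨q₀, q₁, h⟩
  obtain ⟨p, hp, B, ⟨e⟩⟩ := exists_prime_nonempty_equiv_fin_prod Q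
  have h01 : ((⟨0, hp.pos⟩ : Fin p), (e q₀).2) ≠ (⟨1, hp.one_lt⟩, (e q₀).2) := by simp
  obtain ⟨g, hg₀, hg₁⟩ := MulAction.is_two_pretransitive_iff.mp
    (Equiv.Perm.isMultiplyPretransitive (Fin p × B) 2) (e.injective.ne h) h01
  refine ⟨p, hp, B, e.trans g, ?_⟩
  simp only [Equiv.trans_apply, ← Equiv.Perm.smul_def, hg₀, hg₁]

namespace FactPair

variable {X : Type u}

theorem ext {p q : FactPair X} (h₁ : p.1.1 = q.1.1) (h₂ : p.1.2 = q.1.2) : p = q :=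
  Subtype.ext (Prod.ext h₁ h₂)

theorem eq_of_rel (t : FactPair X) {x y : X} (h₁ : t.1.1 x y) (h₂ : t.1.2 x y) : x = y :=
  (t.2.1 x y).1 ⟨h₁, h₂⟩

/-- Each `θ'`-class meets every `θ`-class in exactly one point. -/
noncomputable def sndClassEquiv (t : FactPair X) (x : X) : {y // t.1.2 x y} ≃ Quotient t.1.1 :=
  Equiv.ofBijective (fun y => Quotient.mk _ y.1) ⟨fun y z hyz =>
    Subtype.ext (t.eq_of_rel (Quotient.exact hyz) (t.1.2.trans' (t.1.2.symm' y.2) z.2)),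
    Quotient.ind fun a => by
      obtain ⟨y, hay, hyx⟩ := t.2.2 a x
      exact ⟨⟨y, t.1.2.symm' hyx⟩, (Quotient.sound hay).symm⟩⟩

theorem eq_zero_of_subsingleton (t : FactPair X) [Subsingleton (Quotient t.1.1)] :
    t = FactZero X := by
  have htop : t.1.1 = ⊤ := Quotient.subsingleton_iff.mp inferInstance
  refine ext htop (Setoid.ext fun x y => ⟨fun h => t.eq_of_rel (htop.ge trivial) h, ?_⟩)
  rintro rfl
  exact t.1.2.refl' x

theorem fst_le_of_fst_le_of_snd_le {s t : FactPair X} (h₁ : s.1.1 ≤ t.1.1) (h₂ : s.1.2 ≤ t.1.2) :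
    t.1.1 ≤ s.1.1 := by
  intro x y hxy
  obtain ⟨z, hxz, hzy⟩ := s.2.2 x y
  have : z = y := t.eq_of_rel (t.1.1.trans' (t.1.1.symm' (h₁ hxz)) hxy) (h₂ hzy)
  exact this ▸ hxz

theorem zero_le (t : FactPair X) : FactLE (FactZero X) t :=
  ⟨le_top, bot_le, Setoid.relComp_comm_of_le fun a b ⟨c, hac, hcb⟩ => by
    have hcb : c = b := hcb
    exact ⟨a, (⊥ : Setoid X).refl' a, hcb ▸ hac⟩⟩

theorem le_trans {p q r : FactPair X} (hpq : FactLE p q) (hqr : FactLE q r) : FactLE p r := by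
  obtain ⟨hq₁, hq₂, hqc⟩ := hpq
  obtain ⟨hr₁, hr₂, hrc⟩ := hqr
  refine ⟨hr₁.trans hq₁, hq₂.trans hr₂, Setoid.relComp_comm_of_le fun a b ⟨c, hac, hcb⟩ => ?_⟩
  obtain ⟨d, had, hdb⟩ : Relation.Comp p.1.2 q.1.1 a b := hqc ▸ ⟨c, hr₁ hac, hcb⟩
  obtain ⟨e, hae, heb⟩ : Relation.Comp q.1.2 r.1.1 a b := hrc ▸ ⟨c, hac, hq₂ hcb⟩
  have hde : d = e := q.eq_of_rel (q.1.1.trans' hdb (q.1.1.symm' (hr₁ heb)))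
    (q.1.2.trans' (q.1.2.symm' (hq₂ had)) hae)
  exact ⟨d, had, hde ▸ heb⟩

theorem snd_le_of_card_quotient_prime {s y : FactPair X}
    (hp : (Nat.card (Quotient s.1.1)).Prime) (h₂ : y.1.2 ≤ s.1.2)
    (hy : y ≠ FactZero X) : s.1.2 ≤ y.1.2 := by
  intro x w hxw
  let S := {z // s.1.2 x z}
  have hS : Nat.card S = Nat.card (Quotient s.1.1) := Nat.card_congr (s.sndClassEquiv x)
  have : Finite S := Nat.finite_of_card_ne_zero (hS ▸ hp.ne_zero)
  have hy₁ : Nat.card (Quotient y.1.1) ≠ 1 := fun h =>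
    have := (Nat.card_eq_one_iff_unique.mp h).1
    hy y.eq_zero_of_subsingleton
  have hclass (a : S) : Nat.card {b : S // y.1.2 a b} = Nat.card (Quotient y.1.1) :=
    Nat.card_congr ((Equiv.subtypeSubtypeEquivSubtype fun hab => s.1.2.trans' a.2 (h₂ hab)).trans
      (y.sndClassEquiv a))
  have hdvd := (y.1.2.comap Subtype.val).dvd_nat_card_of_forall_card_eq hclass
  rw [hS] at hdvd
  have hcard : Nat.card S ≤ Nat.card {z // y.1.2 x z} := by
    rw [hS, Nat.card_congr (y.sndClassEquiv x),
      (hp.eq_one_or_self_of_dvd _ hdvd).resolve_left hy₁]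
  have hinj : Injective fun z : {z // y.1.2 x z} => (⟨z.1, h₂ z.2⟩ : S) :=
    fun a b h => Subtype.ext (congrArg (fun z : S => z.1) h)
  obtain ⟨z, hz⟩ := (hinj.bijective_of_nat_card_le hcard).2 ⟨w, hxw⟩
  have hzw : z.1 = w := congrArg (fun z : S => z.1) hz
  exact hzw ▸ z.2

theorem isFactAtom_of_card_quotient_prime {s : FactPair X}
    (hp : (Nat.card (Quotient s.1.1)).Prime) : IsFactAtom s := by
  refine ⟨⟨zero_le s, fun h0 => ?_⟩, fun y ⟨_, hy0⟩ ⟨⟨h₁, h₂, _⟩, hne⟩ => hne ?_⟩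
  · have : Subsingleton (Quotient s.1.1) := Quotient.subsingleton_iff.mpr (h0 ▸ rfl)
    exact hp.one_lt.not_ge (Finite.card_le_one_iff_subsingleton.mpr this)
  · have h₂' := snd_le_of_card_quotient_prime hp h₂ hy0.symm
    exact ext (le_antisymm (fst_le_of_fst_le_of_snd_le h₁ h₂') h₁) (le_antisymm h₂ h₂')

section SplitFst

variable {A B : Type*} (t : FactPair X) (f : X → A × B)

theorem isFactorPair_splitFst (hf : Surjective f) (hker : Setoid.ker f = t.1.1) :
    IsFactorPair (Setoid.ker (Prod.fst ∘ f)) (Setoid.ker (Prod.snd ∘ f) ⊓ t.1.2) := by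
  refine ⟨fun x y => ⟨fun ⟨h₁, h₂, h₃⟩ => t.eq_of_rel ?_ h₃, ?_⟩, fun x y => ?_⟩
  · exact hker ▸ Setoid.ker_def.mpr (Prod.ext h₁ h₂)
  · rintro rfl
    exact ⟨rfl, rfl, t.1.2.refl' x⟩
  · obtain ⟨x', hx'⟩ := hf ((f x).1, (f y).2)
    obtain ⟨z, hx'z, hzy⟩ := t.2.2 x' y
    have hfz : f z = ((f x).1, (f y).2) := hx' ▸ (Setoid.ker_def.mp (hker ▸ hx'z)).symm
    exact ⟨z, show (f x).1 = (f z).1 by rw [hfz],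
      show (f z).2 = (f y).2 by rw [hfz], hzy⟩

/-- The factor pair obtained from `t = (θ, θ')` by splitting the factor `X/θ ≃ A × B`
and moving `B` to the other side. -/
def splitFst (hf : Surjective f) (hker : Setoid.ker f = t.1.1) : FactPair X :=
  ⟨(Setoid.ker (Prod.fst ∘ f), Setoid.ker (Prod.snd ∘ f) ⊓ t.1.2),
    isFactorPair_splitFst t f hf hker⟩

variable {t f}

theorem splitFst_fst_apply {hf : Surjective f} {hker : Setoid.ker f = t.1.1} {x y : X} :
    (t.splitFst f hf hker).1.1 x y ↔ (f x).1 = (f y).1 :=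
  Iff.rfl

theorem splitFst_snd_apply {hf : Surjective f} {hker : Setoid.ker f = t.1.1} {x y : X} :
    (t.splitFst f hf hker).1.2 x y ↔ (f x).2 = (f y).2 ∧ t.1.2 x y :=
  Iff.rfl

theorem splitFst_le (hf : Surjective f) (hker : Setoid.ker f = t.1.1) :
    FactLE (t.splitFst f hf hker) t := by
  refine ⟨fun x y h => splitFst_fst_apply.mpr (congrArg Prod.fst (Setoid.ker_def.mp (hker ▸ h))),
    fun x y h => (splitFst_snd_apply.mp h).2,
    Setoid.relComp_comm_of_le fun a b ⟨c, hac, hcb⟩ => ?_⟩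
  obtain ⟨d, hbd, hda⟩ := t.2.2 b a
  have hfa := Setoid.ker_def.mp (hker ▸ hac)
  have hfd := Setoid.ker_def.mp (hker ▸ hbd)
  refine ⟨d, splitFst_snd_apply.mpr ⟨?_, t.1.2.symm' hda⟩, t.1.1.symm' hbd⟩
  exact (congrArg Prod.snd hfa).trans
    ((splitFst_snd_apply.mp hcb).1.trans (congrArg Prod.snd hfd))

theorem card_quotient_splitFst_fst [Nonempty B] (hf : Surjective f)
    (hker : Setoid.ker f = t.1.1) :
    Nat.card (Quotient (t.splitFst f hf hker).1.1) = Nat.card A :=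
  Nat.card_congr (Setoid.quotientKerEquivOfSurjective _ (Prod.fst_surjective.comp hf))

end SplitFst

theorem exists_isFactAtom_le_snd (t : FactPair X) {x y : X} (hxy : t.1.2 x y) (hne : x ≠ y) :
    ∃ s, IsFactAtom s ∧ FactLE s t ∧ s.1.2 x y := by
  have hq : Quotient.mk t.1.1 x ≠ Quotient.mk t.1.1 y :=
    fun h => hne (t.eq_of_rel (Quotient.exact h) hxy)
  obtain ⟨p, hp, B, e, he⟩ := exists_equiv_fin_prod_snd_eq hq
  have hf : Surjective (e ∘ Quotient.mk t.1.1) := e.surjective.comp Quotient.mk_surjective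
  have hker : Setoid.ker (e ∘ Quotient.mk t.1.1) = t.1.1 :=
    Setoid.ext fun a b => Setoid.ker_def.trans (e.injective.eq_iff.trans Quotient.eq)
  have : Nonempty B := ⟨(e (Quotient.mk _ x)).2⟩
  refine ⟨t.splitFst _ hf hker, isFactAtom_of_card_quotient_prime ?_, splitFst_le hf hker,
    splitFst_snd_apply.mpr ⟨he, hxy⟩⟩
  rwa [card_quotient_splitFst_fst, Nat.card_eq_fintype_card, Fintype.card_fin]

section ForallAtomLE

variable {t u : FactPair X}

theorem snd_le_of_forall_atom_le (H : ∀ a, IsFactAtom a → FactLE a t → FactLE a u) :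
    t.1.2 ≤ u.1.2 := by
  intro x y hxy
  by_cases hne : x = y
  · exact hne ▸ u.1.2.refl' x
  obtain ⟨s, hs, hst, hsxy⟩ := t.exists_isFactAtom_le_snd hxy hne
  exact (H s hs hst).2.1 hsxy

theorem fst_le_of_forall_atom_le (H : ∀ a, IsFactAtom a → FactLE a t → FactLE a u) :
    u.1.1 ≤ t.1.1 := by
  intro x y hxy
  by_contra hnxy
  obtain ⟨z, hxz, hzy⟩ := t.2.2 x y
  have hne : z ≠ y := by rintro rfl; exact hnxy hxz
  obtain ⟨s, hs, hst, hszy⟩ := t.exists_isFactAtom_le_snd hzy hne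
  exact hne (s.eq_of_rel (s.1.1.trans' (s.1.1.symm' (hst.1 hxz)) ((H s hs hst).1 hxy)) hszy)

theorem relComp_comm_of_forall_atom_le (H : ∀ a, IsFactAtom a → FactLE a t → FactLE a u) :
    Relation.Comp u.1.1 t.1.2 = Relation.Comp t.1.2 u.1.1 := by
  have hfst := fst_le_of_forall_atom_le H
  refine Setoid.relComp_comm_of_le fun x y ⟨z, hxz, hzy⟩ => ?_
  obtain ⟨w, hyw, hwx⟩ := t.2.2 y x
  refine ⟨w, t.1.2.symm' hwx, ?_⟩
  by_cases hwx' : w = x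
  · subst hwx'
    have hzy' : z = y :=
      t.eq_of_rel (t.1.1.trans' (t.1.1.symm' (hfst hxz)) (t.1.1.symm' hyw)) hzy
    exact hzy' ▸ hxz
  obtain ⟨s, hs, hst, hswx⟩ := t.exists_isFactAtom_le_snd hwx hwx'
  obtain ⟨-, -, hcomm⟩ := H s hs hst
  obtain ⟨v, hwv, hvz⟩ : Relation.Comp u.1.1 s.1.2 w z := hcomm ▸ ⟨x, hswx, hxz⟩
  have hvy : v = y := t.eq_of_rel (t.1.1.trans' (t.1.1.symm' (hfst hwv)) (t.1.1.symm' hyw))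
    (t.1.2.trans' (hst.2.1 hvz) hzy)
  exact hvy ▸ hwv

end ForallAtomLE

end FactPair

theorem factPair_atomistic_general (X : Type*) (t : FactPair X) :
    ∀ u : FactPair X,
      (∀ a : FactPair X, IsFactAtom a → FactLE a t → FactLE a u) ↔ FactLE t u := by
  intro u
  refine ⟨fun H => ?_, fun htu _ _ hat => FactPair.le_trans hat htu⟩
  exact ⟨FactPair.fst_le_of_forall_atom_le H, FactPair.snd_le_of_forall_atom_le H,
    FactPair.relComp_comm_of_forall_atom_le H⟩

/-- For an infinite set `X`, `Fact X` is atomistic: every element is the least upper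
bound of the atoms below it. -/
theorem factPair_atomistic (X : Type*) [Infinite X] (t : FactPair X) :
    ∀ u : FactPair X,
      (∀ a : FactPair X, IsFactAtom a → FactLE a t → FactLE a u) ↔ FactLE t u :=
  factPair_atomistic_general X t
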